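/- (Curvature of a d-connection: pure horizontal component R^i_{hjk}.) For all h-indices h, j, k, the curvature R(e_k, e_j) e_h = D_{e_k} D_{e_j} e_h − D_{e_j} D_{e_k} e_h − D_{[e_k,e_j]} e_h, computed with the actual Lie bracket of the frame vector fields, is purely horizontal and equals ( e_k L^i_{hj} − e_j L^i_{hk} + L^m_{hj} L^i_{mk} − L^m_{hk} L^i_{mj} − C^i_{ha} Ω^a_{kj} ) e_i, as an identity of vector fields on E. -/

import Mathlib

noncomputable section

/-- The model nonholonomic space `E = ℝⁿ × ℝᵐ` with points `u = (x,y)`. -/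
abbrev Eman (n m : ℕ) : Type := (Fin n → ℝ) × (Fin m → ℝ)

/-- Partial derivative `∂f/∂x^i`. -/
def pdx {n m : ℕ} (f : Eman n m → ℝ) (i : Fin n) (u : Eman n m) : ℝ :=
  fderiv ℝ f u (Pi.single i 1, 0)

/-- Partial derivative `∂f/∂y^a`. -/
def pdy {n m : ℕ} (f : Eman n m → ℝ) (a : Fin m) (u : Eman n m) : ℝ :=
  fderiv ℝ f u (0, Pi.single a 1)

/-- The N-adapted horizontal frame field `e_i = ∂/∂x^i − N_i^a ∂/∂y^a`. -/
def eF {n m : ℕ} (N : Fin n → Fin m → Eman n m → ℝ) (i : Fin n) (u : Eman n m) :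
    Eman n m :=
  (Pi.single i 1, fun a => -(N i a u))

/-- The vertical frame field `∂_a = ∂/∂y^a`. -/
def pF {n m : ℕ} (a : Fin m) (_ : Eman n m) : Eman n m :=
  (0, Pi.single a 1)

/-- Lie bracket of vector fields: `[X,Y](u) = (DY)_u(X(u)) − (DX)_u(Y(u))`. -/
def lieB {n m : ℕ} (X Y : Eman n m → Eman n m) : Eman n m → Eman n m :=
  fun u => fderiv ℝ Y u (X u) - fderiv ℝ X u (Y u)

/-- The N-elongated derivative `e_i f = ∂f/∂x^i − N_i^a ∂f/∂y^a`. -/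
def eDer {n m : ℕ} (N : Fin n → Fin m → Eman n m → ℝ) (i : Fin n) (f : Eman n m → ℝ)
    (u : Eman n m) : ℝ :=
  pdx f i u - ∑ a, N i a u * pdy f a u

/-- The N-connection curvature coefficients
`Ω^a_{ij} = ∂N_i^a/∂x^j − ∂N_j^a/∂x^i + N_i^b ∂N_j^a/∂y^b − N_j^b ∂N_i^a/∂y^b`. -/
def Ωcoef {n m : ℕ} (N : Fin n → Fin m → Eman n m → ℝ) (a : Fin m) (i j : Fin n)
    (u : Eman n m) : ℝ :=
  pdx (N i a) j u - pdx (N j a) i u + (∑ b, N i b u * pdy (N j a) b u)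
    - ∑ b, N j b u * pdy (N i a) b u

/-- Horizontal components `Y^j` of a vector field w.r.t. the N-adapted frame. -/
def hComp {n m : ℕ} (Y : Eman n m → Eman n m) (j : Fin n) (u : Eman n m) : ℝ :=
  (Y u).1 j

/-- Vertical components `Ỹ^b` of a vector field w.r.t. the N-adapted frame
(so that `Y = Y^j e_j + Ỹ^b ∂_b`). -/
def vComp {n m : ℕ} (N : Fin n → Fin m → Eman n m → ℝ) (Y : Eman n m → Eman n m)
    (b : Fin m) (u : Eman n m) : ℝ :=
  (Y u).2 b + ∑ j, (Y u).1 j * N j b u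

/-- Horizontal covariant derivative `D_{e_k} Y` of a d-connection
`(L^i_{jk}, L^a_{bk}, C^i_{jc}, C^a_{bc})`. -/
def Dh {n m : ℕ} (N : Fin n → Fin m → Eman n m → ℝ)
    (L : Fin n → Fin n → Fin n → Eman n m → ℝ)
    (La : Fin m → Fin m → Fin n → Eman n m → ℝ)
    (k : Fin n) (Y : Eman n m → Eman n m) (u : Eman n m) : Eman n m :=
  (∑ j, eDer N k (hComp Y j) u • eF N j u)
    + (∑ j, ∑ i, (hComp Y j u * L i j k u) • eF N i u)
    + (∑ b, eDer N k (vComp N Y b) u • pF b u)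
    + (∑ b, ∑ a, (vComp N Y b u * La a b k u) • pF a u)

/-- Vertical covariant derivative `D_{∂_c} Y` of a d-connection. -/
def Dv {n m : ℕ} (N : Fin n → Fin m → Eman n m → ℝ)
    (C : Fin n → Fin n → Fin m → Eman n m → ℝ)
    (Ca : Fin m → Fin m → Fin m → Eman n m → ℝ)
    (c : Fin m) (Y : Eman n m → Eman n m) (u : Eman n m) : Eman n m :=
  (∑ j, pdy (hComp Y j) c u • eF N j u)
    + (∑ j, ∑ i, (hComp Y j u * C i j c u) • eF N i u)
    + (∑ b, pdy (vComp N Y b) c u • pF b u)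
    + (∑ b, ∑ a, (vComp N Y b u * Ca a b c u) • pF a u)

/-- The covariant derivative `D_X Y = X^k D_{e_k} Y + X̃^c D_{∂_c} Y`. -/
def Dfull {n m : ℕ} (N : Fin n → Fin m → Eman n m → ℝ)
    (L : Fin n → Fin n → Fin n → Eman n m → ℝ)
    (La : Fin m → Fin m → Fin n → Eman n m → ℝ)
    (C : Fin n → Fin n → Fin m → Eman n m → ℝ)
    (Ca : Fin m → Fin m → Fin m → Eman n m → ℝ)
    (X Y : Eman n m → Eman n m) : Eman n m → Eman n m :=
  fun u => (∑ k, hComp X k u • Dh N L La k Y u) + ∑ c, vComp N X c u • Dv N C Ca c Y u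

/-- The torsion `T(X,Y) = D_X Y − D_Y X − [X,Y]` of a d-connection. -/
def torsionVF {n m : ℕ} (N : Fin n → Fin m → Eman n m → ℝ)
    (L : Fin n → Fin n → Fin n → Eman n m → ℝ)
    (La : Fin m → Fin m → Fin n → Eman n m → ℝ)
    (C : Fin n → Fin n → Fin m → Eman n m → ℝ)
    (Ca : Fin m → Fin m → Fin m → Eman n m → ℝ)
    (X Y : Eman n m → Eman n m) : Eman n m → Eman n m :=
  fun u => Dfull N L La C Ca X Y u - Dfull N L La C Ca Y X u - lieB X Y u

/-- The curvature `R(X,Y)Z = D_X D_Y Z − D_Y D_X Z − D_{[X,Y]} Z` of a d-connection. -/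
def curvVF {n m : ℕ} (N : Fin n → Fin m → Eman n m → ℝ)
    (L : Fin n → Fin n → Fin n → Eman n m → ℝ)
    (La : Fin m → Fin m → Fin n → Eman n m → ℝ)
    (C : Fin n → Fin n → Fin m → Eman n m → ℝ)
    (Ca : Fin m → Fin m → Fin m → Eman n m → ℝ)
    (X Y Z : Eman n m → Eman n m) : Eman n m → Eman n m :=
  fun u => Dfull N L La C Ca X (Dfull N L La C Ca Y Z) u
    - Dfull N L La C Ca Y (Dfull N L La C Ca X Z) u
    - Dfull N L La C Ca (lieB X Y) Z u

section Helpers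

variable {n m : ℕ}

lemma eF_decomp (N : Fin n → Fin m → Eman n m → ℝ) (k : Fin n) (u : Eman n m) :
    eF N k u = ((Pi.single k 1 : Fin n → ℝ), (0 : Fin m → ℝ))
      - ∑ b, N k b u • (((0 : Fin n → ℝ), Pi.single b 1) : Eman n m) := by
  ext x
  · simp [eF, Prod.fst_sum]
  · simp [eF, Prod.snd_sum, Finset.sum_apply, Pi.single_apply, mul_ite,
      Finset.sum_ite_eq', eq_comm]

lemma fderiv_apply_eF (N : Fin n → Fin m → Eman n m → ℝ) (f : Eman n m → ℝ)
    (k : Fin n) (u : Eman n m) :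
    fderiv ℝ f u (eF N k u) = eDer N k f u := by
  rw [eF_decomp, map_sub, map_sum]
  simp only [map_smul, smul_eq_mul]
  simp [eDer, pdx, pdy]

lemma eDer_const (N : Fin n → Fin m → Eman n m → ℝ) (k : Fin n) (c : ℝ) (u : Eman n m) :
    eDer N k (fun _ => c) u = 0 := by
  simp [eDer, pdx, pdy]

end Helpers
lemma hComp_eF (N : Fin n → Fin m → Eman n m → ℝ) (h i : Fin n) :
    hComp (eF N h) i = fun _ => (Pi.single h 1 : Fin n → ℝ) i := rfl

lemma vComp_eF (N : Fin n → Fin m → Eman n m → ℝ) (h : Fin n) (b : Fin m) :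
    vComp N (eF N h) b = fun _ => 0 := by
  funext u
  simp [vComp, eF, hComp, Pi.single_apply, ite_mul, Finset.sum_ite_eq']

lemma Dh_eF (N : Fin n → Fin m → Eman n m → ℝ)
    (L : Fin n → Fin n → Fin n → Eman n m → ℝ)
    (La : Fin m → Fin m → Fin n → Eman n m → ℝ) (k h : Fin n) (u : Eman n m) :
    Dh N L La k (eF N h) u = ∑ i, L i h k u • eF N i u := by
  simp only [Dh, hComp_eF, vComp_eF, eDer_const, zero_smul, Finset.sum_const_zero,
    zero_mul, add_zero]
  simp [Pi.single_apply, ite_mul, ite_smul, Finset.sum_ite_eq', Finset.sum_ite_irrel]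

lemma Dv_eF (N : Fin n → Fin m → Eman n m → ℝ)
    (C : Fin n → Fin n → Fin m → Eman n m → ℝ)
    (Ca : Fin m → Fin m → Fin m → Eman n m → ℝ) (c : Fin m) (h : Fin n) (u : Eman n m) :
    Dv N C Ca c (eF N h) u = ∑ i, C i h c u • eF N i u := by
  simp only [Dv, hComp_eF, vComp_eF]
  simp [pdy, Pi.single_apply, ite_mul, ite_smul, Finset.sum_ite_eq', Finset.sum_ite_irrel]

lemma Dfull_eF_left (N : Fin n → Fin m → Eman n m → ℝ)
    (L : Fin n → Fin n → Fin n → Eman n m → ℝ)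
    (La : Fin m → Fin m → Fin n → Eman n m → ℝ)
    (C : Fin n → Fin n → Fin m → Eman n m → ℝ)
    (Ca : Fin m → Fin m → Fin m → Eman n m → ℝ)
    (k : Fin n) (Y : Eman n m → Eman n m) (u : Eman n m) :
    Dfull N L La C Ca (eF N k) Y u = Dh N L La k Y u := by
  simp only [Dfull, hComp_eF, vComp_eF, zero_smul, Finset.sum_const_zero, add_zero]
  simp [Pi.single_apply, ite_smul, Finset.sum_ite_eq']
lemma Omega_eq (N : Fin n → Fin m → Eman n m → ℝ) (a : Fin m) (k j : Fin n) (u : Eman n m) :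
    Ωcoef N a k j u = eDer N j (N k a) u - eDer N k (N j a) u := by
  simp only [Ωcoef, eDer]
  ring

lemma fderiv_eF_apply (N : Fin n → Fin m → Eman n m → ℝ)
    (hN : ∀ i a, ContDiff ℝ (⊤ : ℕ∞) (N i a)) (j : Fin n) (u : Eman n m) (v : Eman n m) :
    fderiv ℝ (eF N j) u v = ((0 : Fin n → ℝ), fun a => -(fderiv ℝ (N j a) u v)) := by
  have hd : ∀ a, DifferentiableAt ℝ (N j a) u := fun a =>
    ((hN j a).differentiable (by simp)).differentiableAt
  have h1 : eF N j = fun u => ((fun _ : Eman n m => (Pi.single j 1 : Fin n → ℝ)) u,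
      (fun u (a : Fin m) => -(N j a u)) u) := rfl
  rw [h1, DifferentiableAt.fderiv_prodMk (differentiableAt_const _)
    (differentiableAt_pi.2 fun a => (hd a).fun_neg)]
  rw [fderiv_fun_const]
  ext <;> simp [fderiv_pi (fun a : Fin m => (hd a).fun_neg), fderiv_fun_neg]
lemma lieB_eF (N : Fin n → Fin m → Eman n m → ℝ)
    (hN : ∀ i a, ContDiff ℝ (⊤ : ℕ∞) (N i a)) (k j : Fin n) :
    lieB (eF N k) (eF N j)
      = fun u => (((0 : Fin n → ℝ), fun a => Ωcoef N a k j u) : Eman n m) := by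
  funext u
  simp only [lieB, fderiv_eF_apply N hN j, fderiv_eF_apply N hN k, fderiv_apply_eF]
  ext a
  · simp
  · simp [Omega_eq]; ring
lemma hComp_sum_eF (N : Fin n → Fin m → Eman n m → ℝ)
    (c : Fin n → Eman n m → ℝ) (i : Fin n) :
    hComp (fun u => ∑ l, c l u • eF N l u) i = c i := by
  funext u
  simp [hComp, eF, Prod.fst_sum, Finset.sum_apply, Pi.single_apply, mul_ite,
    Finset.sum_ite_eq']

lemma vComp_sum_eF (N : Fin n → Fin m → Eman n m → ℝ)
    (c : Fin n → Eman n m → ℝ) (b : Fin m) :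
    vComp N (fun u => ∑ l, c l u • eF N l u) b = fun _ => 0 := by
  funext u
  simp [vComp, eF, Prod.fst_sum, Prod.snd_sum, Finset.sum_apply, Pi.single_apply,
    mul_ite, ite_mul, Finset.sum_ite_eq', mul_comm]

lemma Dh_sum_eF (N : Fin n → Fin m → Eman n m → ℝ)
    (L : Fin n → Fin n → Fin n → Eman n m → ℝ)
    (La : Fin m → Fin m → Fin n → Eman n m → ℝ)
    (k : Fin n) (c : Fin n → Eman n m → ℝ) (u : Eman n m) :
    Dh N L La k (fun u => ∑ l, c l u • eF N l u) u
      = (∑ l, eDer N k (c l) u • eF N l u)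
        + ∑ l, ∑ i, (c l u * L i l k u) • eF N i u := by
  simp only [Dh, hComp_sum_eF, vComp_sum_eF, eDer_const, zero_smul,
    Finset.sum_const_zero, zero_mul, add_zero]
lemma Dfull_W (N : Fin n → Fin m → Eman n m → ℝ)
    (L : Fin n → Fin n → Fin n → Eman n m → ℝ)
    (La : Fin m → Fin m → Fin n → Eman n m → ℝ)
    (C : Fin n → Fin n → Fin m → Eman n m → ℝ)
    (Ca : Fin m → Fin m → Fin m → Eman n m → ℝ)
    (w : Fin m → Eman n m → ℝ) (h : Fin n) (u : Eman n m) :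
    Dfull N L La C Ca (fun u => (((0 : Fin n → ℝ), fun a => w a u) : Eman n m))
        (eF N h) u
      = ∑ c, w c u • ∑ i, C i h c u • eF N i u := by
  have h1 : ∀ i : Fin n,
      hComp (fun u => (((0 : Fin n → ℝ), fun a => w a u) : Eman n m)) i u = 0 := by
    intro i; simp [hComp]
  have h2 : ∀ b : Fin m,
      vComp N (fun u => (((0 : Fin n → ℝ), fun a => w a u) : Eman n m)) b u = w b u := by
    intro b; simp [vComp]
  simp only [Dfull, h1, h2, zero_smul, Finset.sum_const_zero, zero_add]
  exact Finset.sum_congr rfl fun c _ => by rw [Dv_eF]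

/-- **Curvature of a d-connection: pure horizontal component `R^i_{hjk}`.**
`R(e_k, e_j) e_h = (e_k L^i_{hj} − e_j L^i_{hk} + L^m_{hj} L^i_{mk} − L^m_{hk} L^i_{mj}
  − C^i_{ha} Ω^a_{kj}) e_i`. -/
theorem dconnection_curvature_hhh (n m : ℕ)
    (N : Fin n → Fin m → Eman n m → ℝ) (hN : ∀ i a, ContDiff ℝ (⊤ : ℕ∞) (N i a))
    (L : Fin n → Fin n → Fin n → Eman n m → ℝ)
    (hL : ∀ i j k, ContDiff ℝ (⊤ : ℕ∞) (L i j k))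
    (La : Fin m → Fin m → Fin n → Eman n m → ℝ)
    (hLa : ∀ a b k, ContDiff ℝ (⊤ : ℕ∞) (La a b k))
    (C : Fin n → Fin n → Fin m → Eman n m → ℝ)
    (hC : ∀ i j c, ContDiff ℝ (⊤ : ℕ∞) (C i j c))
    (Ca : Fin m → Fin m → Fin m → Eman n m → ℝ)
    (hCa : ∀ a b c, ContDiff ℝ (⊤ : ℕ∞) (Ca a b c)) :
    ∀ h j k : Fin n,
      curvVF N L La C Ca (eF N k) (eF N j) (eF N h)
        = fun u => ∑ i,
            (eDer N k (L i h j) u - eDer N j (L i h k) u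
              + (∑ l, L l h j u * L i l k u) - (∑ l, L l h k u * L i l j u)
              - ∑ a, C i h a u * Ωcoef N a k j u) • eF N i u := by
  intro h j k
  funext u
  have hjh : Dfull N L La C Ca (eF N j) (eF N h)
      = fun u => ∑ i, L i h j u • eF N i u :=
    funext fun u => by rw [Dfull_eF_left, Dh_eF]
  have hkh : Dfull N L La C Ca (eF N k) (eF N h)
      = fun u => ∑ i, L i h k u • eF N i u :=
    funext fun u => by rw [Dfull_eF_left, Dh_eF]
  rw [curvVF, hjh, hkh, lieB_eF N hN k j,
    Dfull_W N L La C Ca (fun a u => Ωcoef N a k j u) h u,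
    Dfull_eF_left, Dfull_eF_left, Dh_sum_eF, Dh_sum_eF]
  have haveA : (∑ l, ∑ i, (L l h j u * L i l k u) • eF N i u)
      = ∑ i, ∑ l, (L l h j u * L i l k u) • eF N i u := Finset.sum_comm
  have haveB : (∑ l, ∑ i, (L l h k u * L i l j u) • eF N i u)
      = ∑ i, ∑ l, (L l h k u * L i l j u) • eF N i u := Finset.sum_comm
  have haveC : (∑ c, Ωcoef N c k j u • ∑ i, C i h c u • eF N i u)
      = ∑ i, ∑ a, (C i h a u * Ωcoef N a k j u) • eF N i u := by
    simp only [Finset.smul_sum, smul_smul]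
    rw [Finset.sum_comm]
    exact Finset.sum_congr rfl fun i _ => Finset.sum_congr rfl fun a _ => by
      rw [mul_comm]
  rw [haveA, haveB, haveC]
  simp only [sub_smul, add_smul, Finset.sum_smul, Finset.sum_sub_distrib,
    Finset.sum_add_distrib]
  abel
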